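/- Let Σ̂ be an n×n real symmetric positive definite matrix and let γ_i := (Σ̂⁻¹)_{ii} denote the i-th diagonal entry of Σ̂⁻¹ (each γ_i > 0). Then for every diagonal matrix Σ_D = diag(d_1,…,d_n) with all d_i > 0, one has 2·D(Σ_D‖Σ̂) ≥ log det( dd(Σ̂⁻¹)·Σ̂ ), and equality holds for Σ_D = diag(γ_1⁻¹,…,γ_n⁻¹); that is, the minimum of 2·D(Σ_D‖Σ̂) over positive diagonal Σ_D equals δ_max(Σ̂) := log det( dd(Σ̂⁻¹)·Σ̂ ) and is attained at Σ_D = diag(γ_1⁻¹,…,γ_n⁻¹). -/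

import Mathlib

/-!
With `γᵢ = (Ŝ⁻¹)ᵢᵢ`, the gap `2·D(diag d‖Ŝ) − log det(dd(Ŝ⁻¹)·Ŝ)` equals
`∑ᵢ (dᵢγᵢ − 1 − log(dᵢγᵢ))`, and every summand is nonnegative by `log x ≤ x − 1`,
vanishing exactly when `dᵢγᵢ = 1`.
-/

noncomputable def klDiv {n : ℕ} (S₁ S₂ : Matrix (Fin n) (Fin n) ℝ) : ℝ :=
  (1 / 2 : ℝ) * (-Real.log S₁.det + Real.log S₂.det + (S₁ * S₂⁻¹).trace - n)

def dd {n : ℕ} (M : Matrix (Fin n) (Fin n) ℝ) : Matrix (Fin n) (Fin n) ℝ :=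
  Matrix.diagonal fun i => M i i

open Finset

lemma Matrix.trace_diagonal_mul {ι R : Type*} [Fintype ι] [DecidableEq ι]
    [NonUnitalNonAssocSemiring R] (d : ι → R) (M : Matrix ι ι R) :
    (Matrix.diagonal d * M).trace = ∑ i, d i * M i i := by
  simp [Matrix.trace, Matrix.diagonal_mul]

lemma log_det_dd_mul {n : ℕ} {M S : Matrix (Fin n) (Fin n) ℝ}
    (hM : ∀ i, 0 < M i i) (hS : 0 < S.det) :
    Real.log ((dd M * S).det) = ∑ i, Real.log (M i i) + Real.log S.det := by
  rw [dd, Matrix.det_mul, Matrix.det_diagonal,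
    Real.log_mul (prod_pos fun i _ => hM i).ne' hS.ne',
    Real.log_prod fun i _ => (hM i).ne']

lemma two_mul_klDiv_diagonal_sub_log_det {n : ℕ} {S : Matrix (Fin n) (Fin n) ℝ}
    (hS : S.PosDef) {d : Fin n → ℝ} (hd : ∀ i, 0 < d i) :
    2 * klDiv (Matrix.diagonal d) S - Real.log ((dd S⁻¹ * S).det) =
      ∑ i, (d i * S⁻¹ i i - 1 - Real.log (d i * S⁻¹ i i)) := by
  have hγ : ∀ i, 0 < S⁻¹ i i := fun _ => hS.inv.diag_pos
  rw [log_det_dd_mul hγ hS.det_pos, klDiv, Matrix.det_diagonal, Matrix.trace_diagonal_mul,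
    Real.log_prod fun i _ => (hd i).ne']
  simp only [Real.log_mul (hd _).ne' (hγ _).ne', sum_sub_distrib, sum_add_distrib, sum_const,
    card_univ, Fintype.card_fin, nsmul_eq_mul, mul_one]
  ring

theorem stmt3 {n : ℕ} (S : Matrix (Fin n) (Fin n) ℝ) (hS : S.PosDef) :
    (∀ i, 0 < S⁻¹ i i) ∧
    (∀ d : Fin n → ℝ, (∀ i, 0 < d i) →
      2 * klDiv (Matrix.diagonal d) S ≥ Real.log ((dd S⁻¹ * S).det)) ∧
    2 * klDiv (Matrix.diagonal fun i => (S⁻¹ i i)⁻¹) S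
      = Real.log ((dd S⁻¹ * S).det) := by
  have hγ : ∀ i, 0 < S⁻¹ i i := fun _ => hS.inv.diag_pos
  refine ⟨hγ, fun d hd => ?_, ?_⟩
  · have gap := two_mul_klDiv_diagonal_sub_log_det hS hd
    have gap_nonneg : 0 ≤ ∑ i, (d i * S⁻¹ i i - 1 - Real.log (d i * S⁻¹ i i)) :=
      sum_nonneg fun i _ => by
        linarith [Real.log_le_sub_one_of_pos (mul_pos (hd i) (hγ i))]
    linarith
  · have gap := two_mul_klDiv_diagonal_sub_log_det hS fun i => inv_pos.mpr (hγ i)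
    simp only [inv_mul_cancel₀ (hγ _).ne', Real.log_one, sub_self, sum_const_zero] at gap
    linarith
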